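/- arXiv:2003.14301 — 2 statements merged into one kernel-verified Lean document; each statement's English description precedes it below -/
import Mathlib

section
/- (Subadditivity Theorem) If μ is a submodular capacity, then the Choquet integral is subadditive: (C)∫_Ω (f + g) dμ ≤ (C)∫_Ω f dμ + (C)∫_Ω g dμ for all bounded nonnegative measurable functions f, g on Ω. -/
/-!
Discretize at mesh `δ`: since `t ↦ μ {t < h}` is antitone, `δ ∑ₙ μ {n δ < h}` is within
`δ μ {0 < h}` of the Choquet integral of `h`. Rounding `h / δ` up to an integer turns these sums
into Choquet integrals of `ℕ`-valued functions `F`, `G`. There `G` is added to `F` one layer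
`{m < G}` at a time, and by submodularity and a telescoping sum each layer costs at most its
capacity `μ {m < G}`. Letting `δ → 0` gives the theorem.
-/

open MeasureTheory ENNReal

/-- The Choquet integral of a nonnegative function `f` on a set `A` with respect
to a capacity `μ`. -/
noncomputable def choquet {Ω : Type*} (μ : Set Ω → ℝ) (f : Ω → ℝ) (A : Set Ω) : ℝ≥0∞ :=
  ∫⁻ t in Set.Ioi (0:ℝ), ENNReal.ofReal (μ ({ω | t < f ω} ∩ A))

open Set Filter Topology

lemma lintegral_Ioi_zero_eq_tsum_Ioc (φ : ℝ → ℝ≥0∞) {δ : ℝ} (hδ : 0 < δ) :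
    ∫⁻ t in Ioi 0, φ t = ∑' n : ℕ, ∫⁻ t in Ioc (n * δ) ((n + 1) * δ), φ t := by
  have hmono : Monotone fun n : ℕ => (n : ℝ) * δ := fun _ _ h =>
    mul_le_mul_of_nonneg_right (Nat.cast_le.2 h) hδ.le
  have hunbdd : ¬BddAbove (range fun n : ℕ => (n : ℝ) * δ) := by
    rw [not_bddAbove_iff]
    intro x
    obtain ⟨n, hn⟩ := exists_nat_gt (x / δ)
    exact ⟨n * δ, mem_range_self n, (div_lt_iff₀ hδ).1 hn⟩
  have hunion : ⋃ n : ℕ, Ioc ((n : ℝ) * δ) ((n + 1) * δ) = Ioi 0 := by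
    simpa using iUnion_Ioc_map_succ_eq_Ioi (fun n => hmono (Nat.zero_le n)) hunbdd
  rw [← hunion, lintegral_iUnion (fun _ => measurableSet_Ioc)]
  simpa using hmono.pairwise_disjoint_on_Ioc_succ

lemma lintegral_Ioi_zero_le_mul_tsum_of_antitone {φ : ℝ → ℝ≥0∞} (hφ : Antitone φ) {δ : ℝ}
    (hδ : 0 < δ) : ∫⁻ t in Ioi 0, φ t ≤ ENNReal.ofReal δ * ∑' n : ℕ, φ (n * δ) := by
  rw [lintegral_Ioi_zero_eq_tsum_Ioc φ hδ, ← ENNReal.tsum_mul_left]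
  refine ENNReal.tsum_le_tsum fun n => ?_
  calc ∫⁻ t in Ioc (n * δ) ((n + 1) * δ), φ t
      ≤ ∫⁻ _ in Ioc (n * δ) ((n + 1) * δ), φ (n * δ) :=
        setLIntegral_mono' measurableSet_Ioc fun t ht => hφ ht.1.le
    _ = ENNReal.ofReal δ * φ (n * δ) := by
        rw [setLIntegral_const, Real.volume_Ioc, mul_comm]
        ring_nf

lemma mul_tsum_le_add_lintegral_Ioi_zero_of_antitone {φ : ℝ → ℝ≥0∞} (hφ : Antitone φ)
    {δ : ℝ} (hδ : 0 < δ) :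
    ENNReal.ofReal δ * ∑' n : ℕ, φ (n * δ) ≤ ENNReal.ofReal δ * φ 0 + ∫⁻ t in Ioi 0, φ t := by
  rw [tsum_eq_zero_add' ENNReal.summable, mul_add, Nat.cast_zero, zero_mul]
  gcongr
  rw [lintegral_Ioi_zero_eq_tsum_Ioc φ hδ, ← ENNReal.tsum_mul_left]
  refine ENNReal.tsum_le_tsum fun n => ?_
  calc ENNReal.ofReal δ * φ ((n + 1 : ℕ) * δ)
      = ∫⁻ _ in Ioc (n * δ) ((n + 1) * δ), φ ((n + 1) * δ) := by
        rw [setLIntegral_const, Real.volume_Ioc, mul_comm]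
        push_cast
        ring_nf
    _ ≤ ∫⁻ t in Ioc (n * δ) ((n + 1) * δ), φ t :=
        setLIntegral_mono' measurableSet_Ioc fun t ht => hφ ht.2

lemma ENNReal.le_of_forall_pos_le_add_ofReal_mul {a b c : ℝ≥0∞} (hc : c ≠ ∞)
    (h : ∀ δ : ℝ, 0 < δ → a ≤ b + ENNReal.ofReal δ * c) : a ≤ b := by
  have hlim : Tendsto (fun δ : ℝ => b + ENNReal.ofReal δ * c) (𝓝[>] 0) (𝓝 b) := by
    have hδ : Tendsto ENNReal.ofReal (𝓝[>] 0) (𝓝 0) := by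
      simpa using (ENNReal.continuous_ofReal.tendsto 0).mono_left nhdsWithin_le_nhds
    simpa using tendsto_const_nhds.add (ENNReal.Tendsto.mul_const hδ (Or.inr hc))
  exact ge_of_tendsto hlim (eventually_nhdsWithin_of_forall h)

section LevelSum

variable {Ω : Type*} {μ : Set Ω → ℝ}

/-- For `F : Ω → ℕ`, `levelSum μ F L` is the Choquet integral of `min F L`. -/
noncomputable def levelSum (μ : Set Ω → ℝ) (F : Ω → ℕ) (L : ℕ) : ℝ :=
  ∑ j ∈ Finset.range L, μ {ω | j < F ω}

lemma levelSum_succ (F : Ω → ℕ) (L : ℕ) :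
    levelSum μ F (L + 1) = levelSum μ F L + μ {ω | L < F ω} :=
  Finset.sum_range_succ _ _

/-- Raising `F` by one on `A` telescopes: with `D j = μ ({j ≤ F} ∩ A)`, submodularity bounds
the increase of the `j`-th level set by `D j - D (j + 1)`. -/
lemma levelSum_add_indicator_le (h0 : μ ∅ = 0) (hmono : ∀ A B : Set Ω, A ⊆ B → μ A ≤ μ B)
    (hsubmod : ∀ A B : Set Ω, μ (A ∪ B) + μ (A ∩ B) ≤ μ A + μ B)
    (F : Ω → ℕ) (A : Set Ω) (L : ℕ) :
    levelSum μ (F + A.indicator 1) L ≤ levelSum μ F L + μ A := by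
  set D : ℕ → ℝ := fun j => μ ({ω | j ≤ F ω} ∩ A)
  have hstep : ∀ j : ℕ,
      μ {ω | j < F ω + A.indicator 1 ω} ≤ μ {ω | j < F ω} + (D j - D (j + 1)) := by
    intro j
    have hunion :
        {ω | j < F ω} ∪ ({ω | j ≤ F ω} ∩ A) = {ω | j < F ω + A.indicator 1 ω} := by
      ext ω
      by_cases hω : ω ∈ A <;> simp [hω]
      omega
    have hinter : {ω | j < F ω} ∩ ({ω | j ≤ F ω} ∩ A) = {ω | j + 1 ≤ F ω} ∩ A := by
      rw [← inter_assoc, inter_eq_left.2 (ofPred_subset_ofPred.2 fun ω => le_of_lt)]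
      rfl
    have := hsubmod {ω | j < F ω} ({ω | j ≤ F ω} ∩ A)
    rw [hunion, hinter] at this
    linarith
  calc levelSum μ (F + A.indicator 1) L
      ≤ ∑ j ∈ Finset.range L, (μ {ω | j < F ω} + (D j - D (j + 1))) :=
        Finset.sum_le_sum fun j _ => hstep j
    _ = levelSum μ F L + (D 0 - D L) := by
        rw [Finset.sum_add_distrib, Finset.sum_range_sub']
        rfl
    _ ≤ levelSum μ F L + μ A := by
        have hD0 : D 0 ≤ μ A := hmono _ _ inter_subset_right
        have hDL : 0 ≤ D L := h0 ▸ hmono _ _ (empty_subset _)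
        linarith

lemma levelSum_add_min_le (h0 : μ ∅ = 0) (hmono : ∀ A B : Set Ω, A ⊆ B → μ A ≤ μ B)
    (hsubmod : ∀ A B : Set Ω, μ (A ∪ B) + μ (A ∩ B) ≤ μ A + μ B)
    (F G : Ω → ℕ) (L m : ℕ) :
    levelSum μ (F + fun ω => min (G ω) m) L ≤ levelSum μ F L + levelSum μ G m := by
  induction m with
  | zero => simp [levelSum]
  | succ m ih =>
    have hsplit : (F + fun ω => min (G ω) (m + 1))
        = (F + fun ω => min (G ω) m) + {ω | m < G ω}.indicator 1 := by
      ext ω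
      by_cases hω : m < G ω <;> simp [hω] <;> omega
    calc levelSum μ (F + fun ω => min (G ω) (m + 1)) L
        ≤ levelSum μ (F + fun ω => min (G ω) m) L + μ {ω | m < G ω} := by
          rw [hsplit]
          exact levelSum_add_indicator_le h0 hmono hsubmod _ _ L
      _ ≤ levelSum μ F L + levelSum μ G (m + 1) := by
          rw [levelSum_succ]
          linarith

lemma levelSum_add_le (h0 : μ ∅ = 0) (hmono : ∀ A B : Set Ω, A ⊆ B → μ A ≤ μ B)
    (hsubmod : ∀ A B : Set Ω, μ (A ∪ B) + μ (A ∩ B) ≤ μ A + μ B) (F G : Ω → ℕ) (L : ℕ) :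
    levelSum μ (F + G) L ≤ levelSum μ F L + levelSum μ G L := by
  have htrunc : levelSum μ (F + G) L = levelSum μ (F + fun ω => min (G ω) L) L := by
    refine Finset.sum_congr rfl fun j hj => congr_arg μ ?_
    ext ω
    simp only [Finset.mem_range] at hj
    simp only [mem_ofPred_eq, Pi.add_apply]
    omega
  rw [htrunc]
  exact levelSum_add_min_le h0 hmono hsubmod F G L L

lemma tsum_ofReal_lt_add_le (h0 : μ ∅ = 0) (hmono : ∀ A B : Set Ω, A ⊆ B → μ A ≤ μ B)
    (hsubmod : ∀ A B : Set Ω, μ (A ∪ B) + μ (A ∩ B) ≤ μ A + μ B) (F G : Ω → ℕ) :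
    ∑' j : ℕ, ENNReal.ofReal (μ {ω | j < F ω + G ω})
      ≤ ∑' j : ℕ, ENNReal.ofReal (μ {ω | j < F ω})
        + ∑' j : ℕ, ENNReal.ofReal (μ {ω | j < G ω}) := by
  have hnonneg : ∀ A, 0 ≤ μ A := fun A => h0 ▸ hmono _ _ (empty_subset A)
  have hsum : ∀ (H : Ω → ℕ) (L : ℕ),
      ∑ j ∈ Finset.range L, ENNReal.ofReal (μ {ω | j < H ω})
        = ENNReal.ofReal (levelSum μ H L) :=
    fun H L => (ENNReal.ofReal_sum_of_nonneg fun j _ => hnonneg _).symm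
  refine ENNReal.tsum_le_of_sum_range_le fun L => ?_
  calc ∑ j ∈ Finset.range L, ENNReal.ofReal (μ {ω | j < F ω + G ω})
      = ENNReal.ofReal (levelSum μ (F + G) L) := hsum (F + G) L
    _ ≤ ENNReal.ofReal (levelSum μ F L + levelSum μ G L) :=
        ENNReal.ofReal_le_ofReal (levelSum_add_le h0 hmono hsubmod F G L)
    _ = ENNReal.ofReal (levelSum μ F L) + ENNReal.ofReal (levelSum μ G L) :=
        ENNReal.ofReal_add (Finset.sum_nonneg fun _ _ => hnonneg _)
          (Finset.sum_nonneg fun _ _ => hnonneg _)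
    _ ≤ _ := by
        rw [← hsum, ← hsum]
        gcongr <;> exact ENNReal.sum_le_tsum _

lemma tsum_ofReal_nat_mul_lt_add_le (h0 : μ ∅ = 0) (hmono : ∀ A B : Set Ω, A ⊆ B → μ A ≤ μ B)
    (hsubmod : ∀ A B : Set Ω, μ (A ∪ B) + μ (A ∩ B) ≤ μ A + μ B) (f g : Ω → ℝ)
    {δ : ℝ} (hδ : 0 < δ) :
    ∑' n : ℕ, ENNReal.ofReal (μ {ω | n * δ < f ω + g ω})
      ≤ ∑' n : ℕ, ENNReal.ofReal (μ {ω | n * δ < f ω})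
        + ∑' n : ℕ, ENNReal.ofReal (μ {ω | n * δ < g ω}) := by
  have hlevel : ∀ (h : Ω → ℝ) (n : ℕ), {ω | n * δ < h ω} = {ω | n < ⌈h ω / δ⌉₊} := by
    intro h n
    ext ω
    simp [Nat.lt_ceil, lt_div_iff₀ hδ]
  calc ∑' n : ℕ, ENNReal.ofReal (μ {ω | n * δ < f ω + g ω})
      ≤ ∑' n : ℕ, ENNReal.ofReal (μ {ω | n < ⌈f ω / δ⌉₊ + ⌈g ω / δ⌉₊}) := by
        refine ENNReal.tsum_le_tsum fun n =>
          ENNReal.ofReal_le_ofReal (hmono _ _ fun ω hω => ?_)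
        have hf := Nat.le_ceil (f ω / δ)
        have hg := Nat.le_ceil (g ω / δ)
        have : (n : ℝ) < f ω / δ + g ω / δ := by
          rw [← add_div, lt_div_iff₀ hδ]
          exact hω
        show n < ⌈f ω / δ⌉₊ + ⌈g ω / δ⌉₊
        exact_mod_cast this.trans_le (add_le_add hf hg)
    _ ≤ _ := tsum_ofReal_lt_add_le h0 hmono hsubmod _ _
    _ = _ := by simp only [hlevel]

end LevelSum

theorem choquet_integral_subadditive_of_submodular_general
    {Ω : Type*} (μ : Set Ω → ℝ)
    (h0 : μ ∅ = 0)
    (hmono : ∀ A B : Set Ω, A ⊆ B → μ A ≤ μ B)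
    (hsubmod : ∀ A B : Set Ω, μ (A ∪ B) + μ (A ∩ B) ≤ μ A + μ B)
    (f g : Ω → ℝ) :
    choquet μ (fun ω => f ω + g ω) Set.univ
      ≤ choquet μ f Set.univ + choquet μ g Set.univ := by
  set φ : (Ω → ℝ) → ℝ → ℝ≥0∞ := fun h t => ENNReal.ofReal (μ {ω | t < h ω})
  have hφ : ∀ h, Antitone (φ h) := fun h s t hst =>
    ENNReal.ofReal_le_ofReal (hmono _ _ fun ω (hω : t < h ω) => hst.trans_lt hω)
  have hchoquet : ∀ h, choquet μ h univ = ∫⁻ t in Ioi 0, φ h t := fun h => by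
    simp only [choquet, inter_univ, φ]
  refine ENNReal.le_of_forall_pos_le_add_ofReal_mul (c := φ f 0 + φ g 0) (by simp [φ])
    fun δ hδ => ?_
  calc choquet μ (fun ω => f ω + g ω) univ
      ≤ ENNReal.ofReal δ * ∑' n : ℕ, φ (fun ω => f ω + g ω) (n * δ) := by
        rw [hchoquet]
        exact lintegral_Ioi_zero_le_mul_tsum_of_antitone (hφ _) hδ
    _ ≤ ENNReal.ofReal δ * ∑' n : ℕ, φ f (n * δ)
          + ENNReal.ofReal δ * ∑' n : ℕ, φ g (n * δ) := by
        rw [← mul_add]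
        gcongr
        exact tsum_ofReal_nat_mul_lt_add_le h0 hmono hsubmod f g hδ
    _ ≤ (ENNReal.ofReal δ * φ f 0 + choquet μ f univ)
          + (ENNReal.ofReal δ * φ g 0 + choquet μ g univ) := by
        rw [hchoquet, hchoquet]
        exact add_le_add (mul_tsum_le_add_lintegral_Ioi_zero_of_antitone (hφ f) hδ)
          (mul_tsum_le_add_lintegral_Ioi_zero_of_antitone (hφ g) hδ)
    _ = choquet μ f univ + choquet μ g univ + ENNReal.ofReal δ * (φ f 0 + φ g 0) := by
        ring

/-- (Subadditivity Theorem) For a submodular capacity, the Choquet integral is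
subadditive. -/
theorem choquet_integral_subadditive_of_submodular
    {Ω : Type*} [MeasurableSpace Ω] (μ : Set Ω → ℝ)
    (h0 : μ ∅ = 0) (h1 : μ Set.univ = 1)
    (hmono : ∀ A B : Set Ω, A ⊆ B → μ A ≤ μ B)
    (hsubmod : ∀ A B : Set Ω, μ (A ∪ B) + μ (A ∩ B) ≤ μ A + μ B)
    (f g : Ω → ℝ) (hf : Measurable f) (hg : Measurable g)
    (hf0 : ∀ ω, 0 ≤ f ω) (hg0 : ∀ ω, 0 ≤ g ω)
    (Mf : ℝ) (hfb : ∀ ω, f ω ≤ Mf) (Mg : ℝ) (hgb : ∀ ω, g ω ≤ Mg) :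
    choquet μ (fun ω => f ω + g ω) Set.univ
      ≤ choquet μ f Set.univ + choquet μ g Set.univ :=
  choquet_integral_subadditive_of_submodular_general μ h0 hmono hsubmod f g
end

section
/- (Moment bound for Bernstein polynomials) For every x ∈ [0,1], n ∈ ℕ and integer j ≥ 0, Σ_{k=0}^{n} p_{k,n}(x) (√n |x − k/n|)^j ≤ 2 G(1 + j/2), where G denotes the Gamma function. -/
/-- Bernstein basis polynomial `p_{k,n}(x) = C(n,k) x^k (1-x)^{n-k}`. -/
noncomputable def bern (n k : ℕ) (x : ℝ) : ℝ := (n.choose k : ℝ) * x ^ k * (1 - x) ^ (n - k)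

/-!
By Hoeffding's lemma the centred Bernoulli variable is sub-Gaussian with variance proxy `1/4`,
so the binomial moment generating function gives
`∑ₖ p_{k,n}(x) exp (s √n (x - k/n)) ≤ exp (s² / 8)`.
Bounding `|y|^j ≤ (j / (e L))^j (e^{L y} + e^{-L y})` and taking `L = 2√j` turns this into
`2 (j / (4e))^{j/2}`, which is at most `2 Γ(1 + j/2)` because truncating Euler's integral to
`[t, ∞)` gives `Γ(t + 1) ≥ (t / e)^t`.
-/

open Real Finset ProbabilityTheory MeasureTheory

lemma bernoulli_centered_mgf_le {x : ℝ} (hx : x ∈ Set.Icc (0:ℝ) 1) (t : ℝ) :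
    x * exp (t * (1 - x)) + (1 - x) * exp (-(t * x)) ≤ exp (t ^ 2 / 8) := by
  have hsupp : ∀ᵐ ω ∂Ber((1:ℝ), 0, ⟨x, hx⟩), ω ∈ Set.Icc (0:ℝ) 1 := by
    rw [ae_iff]
    exact bernoulliMeasure_apply_of_notMem_of_notMem _ measurableSet_Icc.compl (by simp) (by simp)
  have h := (hasSubgaussianMGF_of_mem_Icc aemeasurable_id hsupp).mgf_le t
  simp [mgf, integral_bernoulliMeasure] at h
  exact h.trans_eq (by ring_nf)

lemma bern_nonneg {x : ℝ} (hx : x ∈ Set.Icc (0:ℝ) 1) (n k : ℕ) : 0 ≤ bern n k x := by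
  have : 0 ≤ 1 - x := sub_nonneg.2 hx.2
  have := hx.1
  unfold bern
  positivity

lemma sum_bern_mul_exp_eq_pow (n : ℕ) (x t : ℝ) :
    ∑ k ∈ range (n + 1), bern n k x * exp (t * (k - n * x))
      = (x * exp (t * (1 - x)) + (1 - x) * exp (-(t * x))) ^ n := by
  rw [add_pow]
  refine sum_congr rfl fun k hk => ?_
  have hkn : k ≤ n := Nat.lt_succ_iff.1 (mem_range.1 hk)
  rw [mul_pow, mul_pow, ← exp_nat_mul, ← exp_nat_mul, bern, Nat.cast_sub hkn]
  have hsplit : exp (t * (k - n * x)) = exp (k * (t * (1 - x))) * exp ((n - k) * -(t * x)) := by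
    rw [← exp_add]; ring_nf
  rw [hsplit]
  ring

lemma sum_bern_mul_exp_le {x : ℝ} (hx : x ∈ Set.Icc (0:ℝ) 1) (n : ℕ) (s : ℝ) :
    ∑ k ∈ range (n + 1), bern n k x * exp (s * (√n * (x - k / n))) ≤ exp (s ^ 2 / 8) := by
  rcases n.eq_zero_or_pos with rfl | hn
  · simp [bern]; positivity
  have hn' : (0:ℝ) < n := Nat.cast_pos.2 hn
  have hrescale : ∀ k : ℕ, s * (√n * (x - k / n)) = -s / √n * (k - n * x) := by
    intro k
    have hsq : √(n:ℝ) ^ 2 = n := sq_sqrt hn'.le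
    field_simp
    rw [hsq]
    ring
  simp_rw [hrescale, sum_bern_mul_exp_eq_pow]
  calc _ ≤ exp ((-s / √n) ^ 2 / 8) ^ n := by
        gcongr
        · have := hx.1
          have := sub_nonneg.2 hx.2
          positivity
        · exact bernoulli_centered_mgf_le hx _
    _ = exp (s ^ 2 / 8) := by
        rw [← exp_nat_mul, div_pow, sq_sqrt hn'.le]
        field_simp

lemma pow_le_mul_exp (j : ℕ) {L z : ℝ} (hL : 0 < L) (hz : 0 ≤ z) :
    z ^ j ≤ (j / (exp 1 * L)) ^ j * exp (L * z) := by
  rcases j.eq_zero_or_pos with rfl | hj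
  · simpa using one_le_exp (by positivity)
  have hj' : (0:ℝ) < j := Nat.cast_pos.2 hj
  have hbase : L * z / j ≤ exp (L * z / j - 1) := by
    simpa using add_one_le_exp (L * z / j - 1)
  have hpow := pow_le_pow_left₀ (by positivity) hbase j
  rw [← exp_nat_mul, div_pow] at hpow
  have hexponent : (j:ℝ) * (L * z / j - 1) = L * z - j * 1 := by field_simp
  rw [hexponent, exp_sub, exp_nat_mul, mul_pow, div_le_div_iff₀ (by positivity) (by positivity)] at hpow
  rw [div_pow, mul_pow, div_mul_eq_mul_div, le_div_iff₀ (by positivity)]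
  nlinarith [hpow]

lemma abs_pow_le_mul_exp_add_exp (j : ℕ) {L : ℝ} (hL : 0 < L) (y : ℝ) :
    |y| ^ j ≤ (j / (exp 1 * L)) ^ j * (exp (L * y) + exp (-(L * y))) := by
  refine (pow_le_mul_exp j hL (abs_nonneg y)).trans (mul_le_mul_of_nonneg_left ?_ (by positivity))
  rcases abs_cases y with ⟨h, _⟩ | ⟨h, _⟩ <;> rw [h]
  · linarith [exp_pos (-(L * y))]
  · rw [mul_neg]; linarith [exp_pos (L * y)]

lemma div_exp_one_rpow_le_Gamma_add_one {s : ℝ} (hs : 0 ≤ s) :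
    (s / exp 1) ^ s ≤ Gamma (s + 1) := by
  have hint : IntegrableOn (fun x => exp (-x) * x ^ s) (Set.Ioi 0) := by
    simpa using GammaIntegral_convergent (s := s + 1) (by linarith)
  rw [Gamma_eq_integral (by linarith), add_sub_cancel_right]
  calc (s / exp 1) ^ s = ∫ x in Set.Ioi s, exp (-x) * s ^ s := by
        rw [integral_mul_const, integral_exp_neg_Ioi, div_rpow hs (exp_pos 1).le, exp_one_rpow,
          exp_neg]
        field_simp
    _ ≤ ∫ x in Set.Ioi s, exp (-x) * x ^ s := by
        refine setIntegral_mono_on ?_ (hint.mono_set (Set.Ioi_subset_Ioi hs)) measurableSet_Ioi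
          fun x hx => ?_
        · exact (integrableOn_exp_neg_Ioi s).mul_const _
        · exact mul_le_mul_of_nonneg_left (rpow_le_rpow hs (le_of_lt hx) hs) (exp_pos _).le
    _ ≤ ∫ x in Set.Ioi 0, exp (-x) * x ^ s :=
        setIntegral_mono_set hint
          (ae_restrict_of_forall_mem measurableSet_Ioi fun x hx =>
            mul_nonneg (exp_pos _).le (rpow_nonneg (le_of_lt hx) _))
          (Set.Ioi_subset_Ioi hs).eventuallyLE

lemma sum_bern_mul_abs_pow_le {x : ℝ} (hx : x ∈ Set.Icc (0:ℝ) 1) (n j : ℕ) {L : ℝ} (hL : 0 < L) :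
    ∑ k ∈ range (n + 1), bern n k x * (√n * |x - k / n|) ^ j
      ≤ 2 * (j / (exp 1 * L)) ^ j * exp (L ^ 2 / 8) := by
  set C := (j / (exp 1 * L)) ^ j
  calc ∑ k ∈ range (n + 1), bern n k x * (√n * |x - k / n|) ^ j
      ≤ ∑ k ∈ range (n + 1), bern n k x *
          (C * (exp (L * (√n * (x - k / n))) + exp (-L * (√n * (x - k / n))))) := by
        gcongr with k
        · exact bern_nonneg hx n k
        · rw [← abs_of_nonneg (sqrt_nonneg (n:ℝ)), ← abs_mul, abs_of_nonneg (sqrt_nonneg (n:ℝ)),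
            neg_mul]
          exact abs_pow_le_mul_exp_add_exp j hL _
    _ = C * (∑ k ∈ range (n + 1), bern n k x * exp (L * (√n * (x - k / n)))
          + ∑ k ∈ range (n + 1), bern n k x * exp (-L * (√n * (x - k / n)))) := by
        rw [mul_add, mul_sum, mul_sum, ← sum_add_distrib]
        exact sum_congr rfl fun k _ => by ring
    _ ≤ C * (exp (L ^ 2 / 8) + exp ((-L) ^ 2 / 8)) := by
        gcongr <;> exact sum_bern_mul_exp_le hx n _
    _ = 2 * C * exp (L ^ 2 / 8) := by rw [neg_sq]; ring

lemma pow_div_mul_exp_le_Gamma_one_add_half {j : ℕ} (hj : 0 < j) :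
    (j / (exp 1 * (2 * √j))) ^ j * exp ((2 * √j) ^ 2 / 8) ≤ Gamma (1 + j / 2) := by
  have hj' : (0:ℝ) < j := Nat.cast_pos.2 hj
  have he := exp_pos 1
  refine le_trans ?_ ((div_exp_one_rpow_le_Gamma_add_one (s := j / 2) (by positivity)).trans_eq
    (by rw [add_comm]))
  have hexp : exp ((2 * √j) ^ 2 / 8) = exp (1 / 2) ^ j := by
    rw [← exp_nat_mul, mul_pow, sq_sqrt hj'.le]; ring_nf
  rw [div_right_comm, rpow_div_two_eq_sqrt _ (by positivity), rpow_natCast, hexp, ← mul_pow]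
  gcongr
  rw [le_sqrt (by positivity) (by positivity), mul_pow, ← exp_nat_mul, div_pow, mul_pow, mul_pow,
    sq_sqrt hj'.le]
  field_simp
  norm_num
  nlinarith

lemma sum_bern (n : ℕ) (x : ℝ) : ∑ k ∈ range (n + 1), bern n k x = 1 := by
  simpa using sum_bern_mul_exp_eq_pow n x 0

theorem bernstein_moment_bound_general (n : ℕ) (x : ℝ)
    (hx : x ∈ Set.Icc (0:ℝ) 1) (j : ℕ) :
    ∑ k ∈ Finset.range (n + 1),
        bern n k x * (Real.sqrt n * |x - (k:ℝ)/n|) ^ j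
      ≤ 2 * Real.Gamma (1 + (j:ℝ)/2) := by
  rcases j.eq_zero_or_pos with rfl | hj
  · simp [sum_bern]
  calc _ ≤ 2 * (j / (exp 1 * (2 * √j))) ^ j * exp ((2 * √j) ^ 2 / 8) :=
        sum_bern_mul_abs_pow_le hx n j (by positivity)
    _ ≤ 2 * Gamma (1 + j / 2) := by
        rw [mul_assoc]
        exact mul_le_mul_of_nonneg_left (pow_div_mul_exp_le_Gamma_one_add_half hj) zero_le_two

/-- (Adell–Bustamante–Quesada moment bound) For `x ∈ [0,1]`,
`Σ_k p_{k,n}(x) (√n |x − k/n|)^j ≤ 2 Γ(1 + j/2)`. -/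
theorem bernstein_moment_bound (n : ℕ) (hn : 1 ≤ n) (x : ℝ)
    (hx : x ∈ Set.Icc (0:ℝ) 1) (j : ℕ) :
    ∑ k ∈ Finset.range (n + 1),
        bern n k x * (Real.sqrt n * |x - (k:ℝ)/n|) ^ j
      ≤ 2 * Real.Gamma (1 + (j:ℝ)/2) :=
  bernstein_moment_bound_general n x hx j
end
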